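/- Let (Ω, μ) be a measure space and S : ℝ → ℝ be monotonically decreasing (antitone) and Lipschitz continuous with Lipschitz constant L_S > 0. Let u, v : Ω → ℝ be measurable functions such that u − v belongs to L²(μ). Then S∘u − S∘v belongs to L²(μ) and (1/L_S) · ‖S∘u − S∘v‖²_{L²(μ)} ≤ ∫_Ω (S(u(x)) − S(v(x))) · (v(x) − u(x)) dμ(x). -/

import Mathlib

open MeasureTheory
open scoped NNReal ENNReal

namespace Antitone

variable {S : ℝ → ℝ}

theorem sub_mul_sub_nonneg (hS : Antitone S) (a b : ℝ) : 0 ≤ (S a - S b) * (b - a) := by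
  rcases le_total a b with hab | hab
  · exact mul_nonneg (sub_nonneg.2 (hS hab)) (sub_nonneg.2 hab)
  · exact mul_nonneg_of_nonpos_of_nonpos (sub_nonpos.2 (hS hab)) (sub_nonpos.2 hab)

/-- `S a - S b` and `b - a` have the same sign, so this is the Lipschitz bound multiplied by
`|S a - S b|`. -/
theorem sq_sub_le_mul_sub_mul_sub {K : ℝ≥0} (hS : Antitone S) (hlip : LipschitzWith K S)
    (a b : ℝ) : (S a - S b) ^ 2 ≤ K * ((S a - S b) * (b - a)) := by
  have hsign := hS.sub_mul_sub_nonneg a b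
  have hdist : |S a - S b| ≤ K * |b - a| := by
    simpa [Real.dist_eq, abs_sub_comm b a] using hlip.dist_le_mul a b
  calc (S a - S b) ^ 2 = |S a - S b| * |S a - S b| := by rw [abs_mul_abs_self, sq]
    _ ≤ |S a - S b| * (K * |b - a|) := by gcongr
    _ = K * ((S a - S b) * (b - a)) := by rw [mul_left_comm, ← abs_mul, abs_of_nonneg hsign]

end Antitone

section Lp

variable {Ω E F : Type*} [MeasurableSpace Ω] {μ : Measure Ω} {p : ℝ≥0∞}
  [NormedAddCommGroup E] [NormedAddCommGroup F]

theorem LipschitzWith.memLp_comp_sub_comp {K : ℝ≥0} {f : E → F} (hf : LipschitzWith K f)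
    {u v : Ω → E} (hu : AEStronglyMeasurable u μ) (hv : AEStronglyMeasurable v μ)
    (huv : MemLp (fun x => u x - v x) p μ) : MemLp (fun x => f (u x) - f (v x)) p μ :=
  huv.of_le_mul (c := K)
    ((hf.continuous.comp_aestronglyMeasurable hu).sub (hf.continuous.comp_aestronglyMeasurable hv))
    (Filter.Eventually.of_forall fun x => by
      simpa only [dist_eq_norm] using hf.dist_le_mul (u x) (v x))

end Lp

theorem Antitone.integral_sq_sub_le_mul_integral {Ω : Type*} [MeasurableSpace Ω]
    {μ : Measure Ω} {S : ℝ → ℝ} {K : ℝ≥0} (hS : Antitone S) (hlip : LipschitzWith K S)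
    {u v : Ω → ℝ} (hSuv : MemLp (fun x => S (u x) - S (v x)) 2 μ)
    (huv : MemLp (fun x => u x - v x) 2 μ) :
    ∫ x, (S (u x) - S (v x)) ^ 2 ∂μ ≤ K * ∫ x, (S (u x) - S (v x)) * (v x - u x) ∂μ := by
  have hprod : Integrable (fun x => (S (u x) - S (v x)) * (v x - u x)) μ := by
    have hvu : MemLp (fun x => v x - u x) 2 μ := by simpa only [Pi.neg_def, neg_sub] using huv.neg
    exact hSuv.integrable_mul hvu
  rw [← integral_const_mul]
  exact integral_mono hSuv.integrable_sq (hprod.const_mul _)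
    fun x => hS.sq_sub_le_mul_sub_mul_sub hlip (u x) (v x)

theorem saturation_integrated_monotonicity_estimate_general
    {Ω : Type*} [MeasurableSpace Ω] (μ : Measure Ω)
    (S : ℝ → ℝ) (L_S : ℝ)
    (hanti : Antitone S)
    (hlip : ∀ a b : ℝ, |S a - S b| ≤ L_S * |a - b|)
    (u v : Ω → ℝ) (hu : Measurable u) (hv : Measurable v)
    (huv : MemLp (fun x => u x - v x) 2 μ) :
    MemLp (fun x => S (u x) - S (v x)) 2 μ ∧
      (1 / L_S) * ∫ x, (S (u x) - S (v x)) ^ 2 ∂μ ≤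
        ∫ x, (S (u x) - S (v x)) * (v x - u x) ∂μ := by
  have hL : 0 ≤ L_S := by simpa using (abs_nonneg _).trans (hlip 1 0)
  lift L_S to ℝ≥0 using hL
  have hS : LipschitzWith L_S S :=
    LipschitzWith.of_dist_le_mul fun a b => by simpa only [Real.dist_eq] using hlip a b
  have hSuv := hS.memLp_comp_sub_comp hu.aestronglyMeasurable hv.aestronglyMeasurable huv
  refine ⟨hSuv, ?_⟩
  have hprod_nonneg : 0 ≤ ∫ x, (S (u x) - S (v x)) * (v x - u x) ∂μ :=
    integral_nonneg fun x => hanti.sub_mul_sub_nonneg (u x) (v x)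
  calc (1 / (L_S : ℝ)) * ∫ x, (S (u x) - S (v x)) ^ 2 ∂μ
      ≤ (1 / L_S) * (L_S * ∫ x, (S (u x) - S (v x)) * (v x - u x) ∂μ) := by
        gcongr
        exact hanti.integral_sq_sub_le_mul_integral hS hSuv huv
    _ ≤ ∫ x, (S (u x) - S (v x)) * (v x - u x) ∂μ := by
        -- `1 / 0 = 0`, so for `L_S = 0` the claim is the nonnegativity of the right-hand side.
        rcases eq_or_ne (L_S : ℝ) 0 with h0 | h0
        · simpa [h0] using hprod_nonneg
        · rw [← mul_assoc, one_div_mul_cancel h0, one_mul]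

/-- Integrated monotonicity estimate for the saturation error term `I₁`:
if `S` is antitone and Lipschitz with constant `L_S > 0`, and `u, v` are measurable
with `u − v ∈ L²(μ)`, then `S∘u − S∘v ∈ L²(μ)` and
`(1/L_S) · ‖S∘u − S∘v‖²_{L²} ≤ ∫ (S(u x) − S(v x)) · (v x − u x) dμ`. -/
theorem saturation_integrated_monotonicity_estimate
    {Ω : Type*} [MeasurableSpace Ω] (μ : Measure Ω)
    (S : ℝ → ℝ) (L_S : ℝ) (hL : 0 < L_S)
    (hanti : Antitone S)
    (hlip : ∀ a b : ℝ, |S a - S b| ≤ L_S * |a - b|)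
    (u v : Ω → ℝ) (hu : Measurable u) (hv : Measurable v)
    (huv : MemLp (fun x => u x - v x) 2 μ) :
    MemLp (fun x => S (u x) - S (v x)) 2 μ ∧
      (1 / L_S) * ∫ x, (S (u x) - S (v x)) ^ 2 ∂μ ≤
        ∫ x, (S (u x) - S (v x)) * (v x - u x) ∂μ :=
  saturation_integrated_monotonicity_estimate_general μ S L_S hanti hlip u v hu hv huv
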